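/- arXiv:2006.05620 — 3 statements merged into one kernel-verified Lean document; each statement's English description precedes it below -/
import Mathlib

section
/- Let v ∈ ℝ^k, p > 1, q = p/(p-1), ε > 0, 1 ≤ n ≤ k, and let S = {a ∈ ℝ^k : ‖a‖_p = ε and a has at most n nonzero entries}. Then max_{a ∈ S} aᵀv = ε ‖h‖_q, where h = top_n(v) is obtained from v by keeping the n coordinates of largest absolute value and setting all others to zero. -/
/-!
Hölder's inequality bounds `∑ aᵢ vᵢ` by `‖a‖_p` times the `ℓ_q` norm of `v` restricted to the
support of `a`. Among index sets of size at most `n`, the sum of the `|vᵢ|^q` is largest on `T`,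
because an index outside `T` is dominated by every index of `T`. The bound is attained by the
Hölder extremizer `a = c · sign(v) |v|^(q-1)` supported on `T`.
-/

open Finset Real

theorem Finset.sum_le_sum_of_card_le_of_forall_notMem_le {ι M : Type*} [DecidableEq ι]
    [AddCommMonoid M] [LinearOrder M] [IsOrderedAddMonoid M] {f : ι → M} {s t : Finset ι}
    (hf : ∀ i ∈ t, 0 ≤ f i) (hst : #s ≤ #t) (ht : ∀ i ∈ t, ∀ j ∉ t, f j ≤ f i) :
    ∑ i ∈ s, f i ≤ ∑ i ∈ t, f i := by
  have hcard : #(s \ t) ≤ #(t \ s) := card_sdiff_le_card_sdiff_iff.2 hst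
  suffices h : ∑ i ∈ s \ t, f i ≤ ∑ i ∈ t \ s, f i by
    rw [← sum_inter_add_sum_sdiff s t, ← sum_inter_add_sum_sdiff t s, inter_comm]
    gcongr
  obtain hempty | hne := (t \ s).eq_empty_or_nonempty
  · rw [hempty, card_empty, Nat.le_zero, card_eq_zero] at hcard
    simp [hcard, hempty]
  obtain ⟨m, hm, hmin⟩ := exists_min_image (t \ s) f hne
  have hmt := (mem_sdiff.1 hm).1
  calc ∑ i ∈ s \ t, f i ≤ #(s \ t) • f m :=
        sum_le_card_nsmul _ _ _ fun j hj => ht m hmt j (mem_sdiff.1 hj).2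
    _ ≤ #(t \ s) • f m := nsmul_le_nsmul_left (hf m hmt) hcard
    _ ≤ ∑ i ∈ t \ s, f i := card_nsmul_le_sum _ _ _ hmin

lemma abs_sign_mul_abs_rpow {r : ℝ} (hr : r ≠ 0) (x : ℝ) :
    |(SignType.sign x : ℝ) * |x| ^ r| = |x| ^ r := by
  rcases lt_trichotomy x 0 with hx | rfl | hx
  · simp [hx, abs_of_nonneg (rpow_nonneg (abs_nonneg x) r)]
  · simp [zero_rpow hr]
  · simp [hx, abs_of_nonneg (rpow_nonneg (abs_nonneg x) r)]

lemma sign_mul_abs_rpow_mul_self {r : ℝ} (hr : r + 1 ≠ 0) (x : ℝ) :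
    (SignType.sign x : ℝ) * |x| ^ r * x = |x| ^ (r + 1) := by
  rw [rpow_add_one' (abs_nonneg x) hr, ← sign_mul_self x]
  ring

section Holder

variable {ι : Type*} [Fintype ι] {p q : ℝ}

theorem inner_le_Lp_mul_Lq_of_forall_notMem_eq_zero (hpq : p.HolderConjugate q) {a : ι → ℝ}
    (v : ι → ℝ) {s : Finset ι} (ha : ∀ i ∉ s, a i = 0) :
    ∑ i, a i * v i ≤ (∑ i, |a i| ^ p) ^ (1 / p) * (∑ i ∈ s, |v i| ^ q) ^ (1 / q) := by
  have hsum : ∑ i ∈ s, |a i| ^ p = ∑ i, |a i| ^ p :=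
    sum_subset (subset_univ s) fun i _ hi => by simp [ha i hi, zero_rpow hpq.ne_zero]
  rw [← hsum, ← sum_subset (subset_univ s) fun i _ hi => by simp [ha i hi]]
  exact Real.inner_le_Lp_mul_Lq s a v hpq

theorem exists_Lp_eq_and_inner_eq_of_pos (hpq : p.HolderConjugate q) {ε : ℝ} (hε : 0 ≤ ε)
    {w : ι → ℝ} (hw : 0 < ∑ i, |w i| ^ q) :
    ∃ a : ι → ℝ, (∑ i, |a i| ^ p) ^ (1 / p) = ε ∧ (∀ i, w i = 0 → a i = 0) ∧
      ∑ i, a i * w i = ε * (∑ i, |w i| ^ q) ^ (1 / q) := by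
  set C := ∑ i, |w i| ^ q
  have hCp : 0 < C ^ (1 / p) := rpow_pos_of_pos hw _
  set c := ε / C ^ (1 / p)
  have hc : 0 ≤ c := div_nonneg hε hCp.le
  refine ⟨fun i => c * (SignType.sign (w i) * |w i| ^ (q - 1)), ?_, fun i hi => by simp [hi], ?_⟩
  · have hterm (i : ι) :
        |c * (SignType.sign (w i) * |w i| ^ (q - 1))| ^ p = c ^ p * |w i| ^ q := by
      rw [abs_mul, abs_of_nonneg hc, abs_sign_mul_abs_rpow hpq.symm.sub_one_ne_zero,
        mul_rpow hc (rpow_nonneg (abs_nonneg _) _), ← rpow_mul (abs_nonneg _),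
        hpq.symm.sub_one_mul_conj]
    rw [Fintype.sum_congr _ _ hterm, ← mul_sum, mul_rpow (rpow_nonneg hc _) hw.le, ← rpow_mul hc,
      mul_one_div_cancel hpq.ne_zero, rpow_one, div_mul_cancel₀ _ hCp.ne']
  · have hterm (i : ι) : c * (SignType.sign (w i) * |w i| ^ (q - 1)) * w i = c * |w i| ^ q := by
      rw [mul_assoc, sign_mul_abs_rpow_mul_self (by simpa using hpq.symm.ne_zero), sub_add_cancel]
    have hC : C ^ (1 / q) * C ^ (1 / p) = C := by
      rw [← rpow_add hw, one_div, one_div, add_comm, hpq.inv_add_inv_eq_one, rpow_one]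
    rw [Fintype.sum_congr _ _ hterm, ← mul_sum]
    calc c * C = ε / C ^ (1 / p) * (C ^ (1 / q) * C ^ (1 / p)) := by rw [hC]
      _ = ε * C ^ (1 / q) := by field_simp

theorem sum_abs_ite_mem_rpow [DecidableEq ι] (hq : q ≠ 0) (T : Finset ι) (v : ι → ℝ) :
    ∑ i, |if i ∈ T then v i else 0| ^ q = ∑ i ∈ T, |v i| ^ q := by
  simp only [apply_ite (fun x => |x| ^ q), abs_zero, zero_rpow hq, sum_ite_mem, univ_inter]

theorem exists_Lp_eq_and_inner_eq_of_nonempty [DecidableEq ι] (hpq : p.HolderConjugate q)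
    {ε : ℝ} (hε : 0 ≤ ε) (v : ι → ℝ) {T : Finset ι} (hT : T.Nonempty) :
    ∃ a : ι → ℝ, (∑ i, |a i| ^ p) ^ (1 / p) = ε ∧ (∀ i ∉ T, a i = 0) ∧
      ∑ i, a i * v i = ε * (∑ i ∈ T, |v i| ^ q) ^ (1 / q) := by
  rw [← sum_abs_ite_mem_rpow hpq.symm.ne_zero]
  -- if `v` vanishes on `T`, every vector of norm `ε` supported in `T` is optimal
  obtain hzero | hpos := (sum_nonneg (s := univ) fun i _ =>
    rpow_nonneg (abs_nonneg (if i ∈ T then v i else 0)) q).eq_or_lt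
  · obtain ⟨i₀, hi₀⟩ := hT
    have hv : v i₀ = 0 := by
      have := (sum_eq_zero_iff_of_nonneg fun i _ => rpow_nonneg (abs_nonneg _) q).1 hzero.symm i₀
      simpa [hi₀, hpq.symm.ne_zero] using this
    refine ⟨Pi.single i₀ ε, ?_, fun i hi => ?_, ?_⟩
    · rw [Fintype.sum_eq_single i₀ fun i hi => by simp [hi, zero_rpow hpq.ne_zero]]
      simp [abs_of_nonneg hε, ← rpow_mul hε, mul_inv_cancel₀ hpq.ne_zero]
    · simp [ne_of_mem_of_not_mem hi₀ hi |>.symm]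
    · rw [← hzero, zero_rpow (one_div_ne_zero hpq.symm.ne_zero)]
      simp [Pi.single_apply, ite_mul, hv]
  · obtain ⟨a, ha_norm, ha_supp, ha_inner⟩ := exists_Lp_eq_and_inner_eq_of_pos hpq hε hpos
    have hsupp : ∀ i ∉ T, a i = 0 := fun i hi => ha_supp i (if_neg hi)
    refine ⟨a, ha_norm, hsupp, ha_inner ▸ Fintype.sum_congr _ _ fun i => ?_⟩
    by_cases hi : i ∈ T <;> simp [hi, hsupp]

end Holder

theorem constrained_max_eq_topn_general (k n : ℕ) (hn : 1 ≤ n)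
    (v : Fin k → ℝ) (p ε q : ℝ) (hp : 1 < p) (hε : 0 < ε) (hq : q = p / (p - 1))
    (T : Finset (Fin k)) (hT : T.card = n)
    (hTtop : ∀ i ∈ T, ∀ j, j ∉ T → |v j| ≤ |v i|)
    (h : Fin k → ℝ) (hh : h = fun i => if i ∈ T then v i else 0) :
    IsGreatest {s : ℝ | ∃ a : Fin k → ℝ,
        (∑ i, |a i| ^ p) ^ (1 / p) = ε ∧
        (Finset.univ.filter (fun i => a i ≠ 0)).card ≤ n ∧
        s = ∑ i, a i * v i}
      (ε * (∑ i, |h i| ^ q) ^ (1 / q)) := by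
  have hpq : p.HolderConjugate q := (Real.holderConjugate_iff_eq_conjExponent hp).2 hq
  rw [hh, sum_abs_ite_mem_rpow hpq.symm.ne_zero]
  constructor
  · obtain ⟨a, ha_norm, ha_supp, ha_inner⟩ :=
      exists_Lp_eq_and_inner_eq_of_nonempty hpq hε.le v (card_pos.1 (hT ▸ hn))
    refine ⟨a, ha_norm, ?_, ha_inner.symm⟩
    calc #{i | a i ≠ 0} ≤ #T := card_le_card fun i hi =>
          by_contra fun hiT => (mem_filter.1 hi).2 (ha_supp i hiT)
      _ = n := hT
  · rintro _ ⟨a, ha_norm, ha_card, rfl⟩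
    calc ∑ i, a i * v i
        ≤ (∑ i, |a i| ^ p) ^ (1 / p) * (∑ i ∈ {i | a i ≠ 0}, |v i| ^ q) ^ (1 / q) :=
          inner_le_Lp_mul_Lq_of_forall_notMem_eq_zero hpq v fun i hi => by simpa using hi
      _ ≤ ε * (∑ i ∈ T, |v i| ^ q) ^ (1 / q) := by
        rw [ha_norm]
        gcongr ε * ?_ ^ _
        · exact one_div_nonneg.2 hpq.symm.nonneg
        exact sum_le_sum_of_card_le_of_forall_notMem_le (fun i _ => by positivity) (hT ▸ ha_card)
          fun i hi j hj => rpow_le_rpow (abs_nonneg _) (hTtop i hi j hj) hpq.symm.nonneg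

theorem constrained_max_eq_topn (k n : ℕ) (hn : 1 ≤ n) (hnk : n ≤ k)
    (v : Fin k → ℝ) (p ε q : ℝ) (hp : 1 < p) (hε : 0 < ε) (hq : q = p / (p - 1))
    (T : Finset (Fin k)) (hT : T.card = n)
    (hTtop : ∀ i ∈ T, ∀ j, j ∉ T → |v j| ≤ |v i|)
    (h : Fin k → ℝ) (hh : h = fun i => if i ∈ T then v i else 0) :
    IsGreatest {s : ℝ | ∃ a : Fin k → ℝ,
        (∑ i, |a i| ^ p) ^ (1 / p) = ε ∧
        (Finset.univ.filter (fun i => a i ≠ 0)).card ≤ n ∧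
        s = ∑ i, a i * v i}
      (ε * (∑ i, |h i| ^ q) ^ (1 / q)) :=
  constrained_max_eq_topn_general k n hn v p ε q hp hε hq T hT hTtop h hh
end

section
/- Let L : ℝ^k → ℝ be convex with L-Lipschitz gradient (L-smooth) on a neighborhood containing w + S, where S = {a : ‖a‖_p = ε, ‖a‖₀ ≤ n}, p > 1, q = p/(p-1). Let g = ∇L(w) with ‖g‖₂ = G > 0, h = top_n(g), and let â = argmax_{a∈S} aᵀg be the gradient-based corruption. Then for any a* ∈ S, L(w + a*) − L(w) ≤ ε‖h‖_q + (L/2)‖a*‖₂², and L(w + â) − L(w) ≥ ε‖h‖_q. -/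
/-!
Both bounds are first-order estimates for `f` along the segment from `w` to `w + a`. Convexity puts
the graph above its tangent plane, so `f (w + â) - f w ≥ ⟪g, â⟫ = ε ‖h‖_q`. A Lipschitz gradient
bounds the slope of `t ↦ f (w + t a)` by `⟪g, a⟫ + L t ‖a‖²`, and integrating gives the descent
lemma `f (w + a) - f w ≤ ⟪g, a⟫ + L/2 ‖a‖²`; finally `⟪g, a⟫ ≤ ⟪g, â⟫` since `â` maximises
`a ↦ ⟪a, g⟫` over `S`.
-/

open scoped RealInnerProductSpace
open AffineMap Set

section FirstOrder

variable {E : Type*} [NormedAddCommGroup E] [InnerProductSpace ℝ E] [CompleteSpace E]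
  {f : E → ℝ} {x y : E}

theorem HasGradientAt.hasDerivAt_comp_lineMap {f' : E} {t : ℝ}
    (hf : HasGradientAt f f' (lineMap x y t)) :
    HasDerivAt (f ∘ lineMap x y) ⟪f', y - x⟫ t := by
  simpa using hf.hasFDerivAt.comp_hasDerivAt t hasDerivAt_lineMap

theorem ConvexOn.inner_le_sub_of_hasGradientAt {U : Set E} {f' : E} (hf : ConvexOn ℝ U f)
    (hx : x ∈ U) (hy : y ∈ U) (hfx : HasGradientAt f f' x) :
    ⟪f', y - x⟫ ≤ f y - f x := by
  have hline : ConvexOn ℝ (lineMap x y ⁻¹' U) (f ∘ lineMap x y) := hf.comp_affineMap _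
  have hderiv : HasDerivAt (f ∘ lineMap x y) ⟪f', y - x⟫ (0 : ℝ) :=
    HasGradientAt.hasDerivAt_comp_lineMap (by rwa [lineMap_apply_zero])
  simpa [slope_def_field] using
    hline.le_slope_of_hasDerivAt (x := 0) (y := 1) (by simpa) (by simpa) one_pos hderiv

theorem sub_le_inner_gradient_add_of_norm_gradient_sub_le {L : ℝ}
    (hf : ∀ z ∈ segment ℝ x y, DifferentiableAt ℝ f z)
    (hlip : ∀ z ∈ segment ℝ x y, ‖gradient f z - gradient f x‖ ≤ L * ‖z - x‖) :
    f y - f x ≤ ⟪gradient f x, y - x⟫ + L / 2 * ‖y - x‖ ^ 2 := by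
  set d := y - x
  have hmem : ∀ t ∈ Icc (0 : ℝ) 1, lineMap x y t ∈ segment ℝ x y := fun t ht => by
    rw [segment_eq_image_lineMap]; exact mem_image_of_mem _ ht
  have hslope : ∀ t ∈ Icc (0 : ℝ) 1,
      ⟪gradient f (lineMap x y t), d⟫ - ⟪gradient f x, d⟫ ≤ L * t * ‖d‖ ^ 2 := fun t ht =>
    calc ⟪gradient f (lineMap x y t), d⟫ - ⟪gradient f x, d⟫
          = ⟪gradient f (lineMap x y t) - gradient f x, d⟫ := (inner_sub_left _ _ _).symm
      _ ≤ ‖gradient f (lineMap x y t) - gradient f x‖ * ‖d‖ := real_inner_le_norm _ _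
      _ ≤ L * ‖lineMap x y t - x‖ * ‖d‖ :=
          mul_le_mul_of_nonneg_right (hlip _ (hmem t ht)) (norm_nonneg d)
      _ = L * t * ‖d‖ ^ 2 := by
          rw [← vsub_eq_sub, lineMap_vsub_left, vsub_eq_sub, norm_smul, Real.norm_eq_abs,
            abs_of_nonneg ht.1]
          ring
  -- Compare `t ↦ f (lineMap x y t) - t ⟪∇f x, d⟫` with the parabola `f x + L/2 t² ‖d‖²` on `[0, 1]`.
  have hgap : ∀ t ∈ Icc (0 : ℝ) 1,
      HasDerivAt (fun t => f (lineMap x y t) - t * ⟪gradient f x, d⟫)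
        (⟪gradient f (lineMap x y t), d⟫ - ⟪gradient f x, d⟫) t := fun t ht =>
    (hf _ (hmem t ht)).hasGradientAt.hasDerivAt_comp_lineMap.sub (hasDerivAt_mul_const _)
  have hparabola : ∀ t : ℝ,
      HasDerivAt (fun t => f x + L / 2 * t ^ 2 * ‖d‖ ^ 2) (L * t * ‖d‖ ^ 2) t :=
    fun t => ((((hasDerivAt_pow 2 t).const_mul (L / 2)).mul_const (‖d‖ ^ 2)).const_add
      (f x)).congr_deriv (by rw [Nat.cast_ofNat, Nat.add_one_sub_one, pow_one]; ring)
  have hend := image_le_of_deriv_right_le_deriv_boundary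
    (fun t ht => (hgap t ht).continuousAt.continuousWithinAt)
    (fun t ht => (hgap t (Ico_subset_Icc_self ht)).hasDerivWithinAt)
    (by simp) (fun t _ => (hparabola t).continuousAt.continuousWithinAt)
    (fun t _ => (hparabola t).hasDerivWithinAt) (fun t ht => hslope t (Ico_subset_Icc_self ht))
    (right_mem_Icc.2 zero_le_one)
  simp only [lineMap_apply_one, one_mul, one_pow, mul_one] at hend
  linarith

end FirstOrder

theorem smooth_convex_corruption_bounds_general (k : ℕ)
    (ε q Lc : ℝ)
    (f : EuclideanSpace ℝ (Fin k) → ℝ)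
    (w : EuclideanSpace ℝ (Fin k))
    (U : Set (EuclideanSpace ℝ (Fin k)))
    (S : Set (EuclideanSpace ℝ (Fin k)))
    (hwU : w ∈ U) (hU : ∀ a ∈ S, w + a ∈ U)
    (hUconv : Convex ℝ U)
    (hdiff : ∀ x ∈ U, DifferentiableAt ℝ f x)
    (hconv : ConvexOn ℝ U f)
    (hsmooth : ∀ x ∈ U, ∀ y ∈ U, ‖gradient f x - gradient f y‖ ≤ Lc * ‖x - y‖)
    (g : EuclideanSpace ℝ (Fin k)) (hg : g = gradient f w)
    (h : Fin k → ℝ)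
    (ahat : EuclideanSpace ℝ (Fin k)) (hahatS : ahat ∈ S)
    (hmax : ∀ a ∈ S, ⟪a, g⟫ ≤ ⟪ahat, g⟫)
    (hval : ⟪ahat, g⟫ = ε * (∑ i, |h i| ^ q) ^ (1 / q)) :
    (∀ a ∈ S, f (w + a) - f w ≤ ε * (∑ i, |h i| ^ q) ^ (1 / q) + Lc / 2 * ‖a‖ ^ 2) ∧
    ε * (∑ i, |h i| ^ q) ^ (1 / q) ≤ f (w + ahat) - f w := by
  refine ⟨fun a ha => ?_, ?_⟩
  · have hseg : segment ℝ w (w + a) ⊆ U := hUconv.segment_subset hwU (hU a ha)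
    have hdescent := sub_le_inner_gradient_add_of_norm_gradient_sub_le (L := Lc)
      (fun z hz => hdiff z (hseg hz)) (fun z hz => hsmooth z (hseg hz) w hwU)
    rw [← hg, add_sub_cancel_left] at hdescent
    have hga : ⟪g, a⟫ ≤ ⟪ahat, g⟫ := real_inner_comm a g ▸ hmax a ha
    linarith
  · have hsupport := hconv.inner_le_sub_of_hasGradientAt hwU (hU _ hahatS)
      (hdiff w hwU).hasGradientAt
    rwa [← hg, add_sub_cancel_left, real_inner_comm, hval] at hsupport

theorem smooth_convex_corruption_bounds (k n : ℕ) (hn : 1 ≤ n) (hnk : n ≤ k)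
    (p ε q Lc G : ℝ) (hp : 1 < p) (hq : q = p / (p - 1)) (hε : 0 < ε)
    (f : EuclideanSpace ℝ (Fin k) → ℝ)
    (w : EuclideanSpace ℝ (Fin k))
    (U : Set (EuclideanSpace ℝ (Fin k)))
    (S : Set (EuclideanSpace ℝ (Fin k)))
    (hS : S = {a : EuclideanSpace ℝ (Fin k) |
        (∑ i, |a i| ^ p) ^ (1 / p) = ε ∧
        (Finset.univ.filter (fun i => a i ≠ 0)).card ≤ n})
    (hwU : w ∈ U) (hU : ∀ a ∈ S, w + a ∈ U)
    (hUopen : IsOpen U) (hUconv : Convex ℝ U)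
    (hdiff : ∀ x ∈ U, DifferentiableAt ℝ f x)
    (hconv : ConvexOn ℝ U f)
    (hsmooth : ∀ x ∈ U, ∀ y ∈ U, ‖gradient f x - gradient f y‖ ≤ Lc * ‖x - y‖)
    (g : EuclideanSpace ℝ (Fin k)) (hg : g = gradient f w)
    (hG : ‖g‖ = G) (hGpos : 0 < G)
    (T : Finset (Fin k)) (hT : T.card = n)
    (hTtop : ∀ i ∈ T, ∀ j, j ∉ T → |g j| ≤ |g i|)
    (h : Fin k → ℝ) (hh : h = fun i => if i ∈ T then g i else 0)
    (ahat : EuclideanSpace ℝ (Fin k)) (hahatS : ahat ∈ S)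
    (hmax : ∀ a ∈ S, ⟪a, g⟫ ≤ ⟪ahat, g⟫)
    (hval : ⟪ahat, g⟫ = ε * (∑ i, |h i| ^ q) ^ (1 / q)) :
    (∀ a ∈ S, f (w + a) - f w ≤ ε * (∑ i, |h i| ^ q) ^ (1 / q) + Lc / 2 * ‖a‖ ^ 2) ∧
    ε * (∑ i, |h i| ^ q) ^ (1 / q) ≤ f (w + ahat) - f w :=
  smooth_convex_corruption_bounds_general k ε q Lc f w U S hwU hU hUconv hdiff hconv hsmooth g hg h
    ahat hahatS hmax hval
end

section
/- With the setup of the error-bound theorem (L convex and L-smooth near w, S = {a : ‖a‖_p = ε, ‖a‖₀ ≤ n}, g = ∇L(w), G = ‖g‖₂ > 0), the ratio of the maximal loss change to the gradient-based loss change satisfies max_{a∈S}(L(w+a) − L(w)) / (L(w+â) − L(w)) ≤ 1 + L β_p² β_q ε √k / (2 G √n), where β_r = max{1, n^{1/2 − 1/r}}. -/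
open scoped RealInnerProductSpace


lemma sparse_l2_le {ι : Type*} [Fintype ι] (n : ℕ) (r : ℝ) (hr : 1 < r) (x : ι → ℝ)
    (hcard : (Finset.univ.filter (fun i => x i ≠ 0)).card ≤ n) :
    Real.sqrt (∑ i, x i ^ 2) ≤
      max 1 ((n : ℝ) ^ ((1 : ℝ) / 2 - 1 / r)) * (∑ i, |x i| ^ r) ^ ((1 : ℝ) / r) := by
  classical
  set s := Finset.univ.filter (fun i => x i ≠ 0) with hs
  have hr0 : (0 : ℝ) < r := by linarith
  have hA0 : (0 : ℝ) ≤ ∑ i, |x i| ^ r :=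
    Finset.sum_nonneg fun i _ => Real.rpow_nonneg (abs_nonneg _) _
  set A := ∑ i, |x i| ^ r with hAdef
  set M := A ^ ((1 : ℝ) / r) with hM
  have hM0 : 0 ≤ M := Real.rpow_nonneg hA0 _
  have hMr : M ^ r = A := by
    rw [hM, ← Real.rpow_mul hA0, one_div, inv_mul_cancel₀ (ne_of_gt hr0), Real.rpow_one]
  have hmax1 : (1 : ℝ) ≤ max 1 ((n : ℝ) ^ ((1 : ℝ) / 2 - 1 / r)) := le_max_left _ _
  have hxleM : ∀ i, |x i| ≤ M := by
    intro i
    have h1 : |x i| ^ r ≤ A := by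
      rw [hAdef]
      exact Finset.single_le_sum (f := fun i => |x i| ^ r)
        (fun j _ => Real.rpow_nonneg (abs_nonneg _) _) (Finset.mem_univ i)
    rw [← hMr] at h1
    exact (Real.rpow_le_rpow_iff (abs_nonneg _) hM0 hr0).mp h1
  rcases le_or_gt r 2 with hr2 | hr2
  · -- small exponent: ∑ x² ≤ M²
    have key : ∑ i, x i ^ 2 ≤ M ^ 2 := by
      have hterm : ∀ i, x i ^ 2 ≤ |x i| ^ r * M ^ (2 - r) := by
        intro i
        rcases eq_or_ne (x i) 0 with h0 | h0
        · simp [h0, Real.zero_rpow (ne_of_gt hr0),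
            mul_nonneg (Real.rpow_nonneg (abs_nonneg _) _) (Real.rpow_nonneg hM0 _)]
        · have habs : (0 : ℝ) < |x i| := abs_pos.mpr h0
          have : x i ^ 2 = |x i| ^ r * |x i| ^ (2 - r) := by
            rw [← Real.rpow_add habs]
            norm_num
          rw [this]
          exact mul_le_mul_of_nonneg_left
            (Real.rpow_le_rpow (abs_nonneg _) (hxleM i) (by linarith))
            (Real.rpow_nonneg (abs_nonneg _) _)
      calc ∑ i, x i ^ 2 ≤ ∑ i, |x i| ^ r * M ^ (2 - r) :=
            Finset.sum_le_sum fun i _ => hterm i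
        _ = A * M ^ (2 - r) := by rw [← Finset.sum_mul]
        _ = M ^ r * M ^ (2 - r) := by rw [hMr]
        _ = M ^ (2 : ℝ) := by
            rcases eq_or_lt_of_le hM0 with h | h
            · rcases eq_or_ne r 2 with hre | hre
              · simp [← h, hre, Real.zero_rpow (ne_of_gt hr0)]
              · simp [← h, Real.zero_rpow (ne_of_gt hr0), Real.zero_rpow (sub_ne_zero.mpr (Ne.symm hre))]
            · rw [← Real.rpow_add h]; ring_nf
        _ = M ^ 2 := by
            rw [show ((2:ℝ)) = ((2:ℕ):ℝ) by norm_num, Real.rpow_natCast]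
    have := Real.sqrt_le_sqrt key
    rw [Real.sqrt_sq hM0] at this
    calc Real.sqrt (∑ i, x i ^ 2) ≤ M := this
      _ ≤ max 1 ((n : ℝ) ^ ((1 : ℝ) / 2 - 1 / r)) * M := by
          nlinarith [hM0]
  · -- large exponent: Hölder
    have h2 : (∑ i, x i ^ 2) = ∑ i ∈ s, x i ^ 2 := by
      rw [hs, Finset.sum_filter_of_ne]
      intro i _ hne h0
      simp [h0] at hne
    have h3 : A = ∑ i ∈ s, |x i| ^ r := by
      rw [hAdef, hs, Finset.sum_filter_of_ne]
      intro i _ hne h0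
      simp [h0, Real.zero_rpow (ne_of_gt hr0)] at hne
    -- Hölder with exponents r/2 and its conjugate
    have hP : (1 : ℝ) < r / 2 := by linarith
    have hpq : (r / 2).HolderConjugate ((r/2) / (r/2 - 1)) := Real.HolderConjugate.conjExponent hP
    have hold := Real.inner_le_Lp_mul_Lq s (fun i => x i ^ 2) (fun _ => (1:ℝ)) hpq
    simp only [mul_one] at hold
    have e1 : ∀ i, |x i ^ 2| ^ (r / 2) = |x i| ^ r := by
      intro i
      rw [abs_pow, ← Real.rpow_natCast (|x i|) 2, ← Real.rpow_mul (abs_nonneg _)]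
      congr 1
      push_cast
      ring
    have e2 : (∑ i ∈ s, |(1:ℝ)| ^ ((r/2) / (r/2 - 1))) = (s.card : ℝ) := by simp
    rw [e2] at hold
    simp only [e1] at hold
    rw [← h3] at hold
    -- so ∑_s x² ≤ A^(2/r) * card^(1 - 2/r)
    have hq1 : 1 / ((r/2) / (r/2 - 1)) = 1 - 2 / r := by
      field_simp
    have hp1 : 1 / (r / 2) = 2 / r := by rw [one_div, inv_div]
    rw [hq1, hp1] at hold
    rw [h2]
    have hcard0 : (0:ℝ) ≤ (s.card : ℝ) := Nat.cast_nonneg _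
    have hsum_le : ∑ i ∈ s, x i ^ 2 ≤ A ^ ((2:ℝ)/r) * (n:ℝ) ^ (1 - 2/r) := by
      refine hold.trans (mul_le_mul_of_nonneg_left ?_ (Real.rpow_nonneg hA0 _))
      exact Real.rpow_le_rpow hcard0 (Nat.cast_le.mpr hcard) (by rw [sub_nonneg]; exact (div_le_one hr0).mpr (by linarith))
    have := Real.sqrt_le_sqrt hsum_le
    refine this.trans ?_
    have hn0 : (0:ℝ) ≤ (n:ℝ) := Nat.cast_nonneg _
    rw [Real.sqrt_eq_rpow, Real.mul_rpow (Real.rpow_nonneg hA0 _) (Real.rpow_nonneg hn0 _),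
      ← Real.rpow_mul hA0, ← Real.rpow_mul hn0]
    have : (2:ℝ)/r * (1/2) = 1/r := by ring
    rw [this]
    have : (1 - 2/r) * (1/2) = 1/2 - 1/r := by ring
    rw [this]
    rw [mul_comm]
    exact mul_le_mul_of_nonneg_right (le_max_right _ _) (Real.rpow_nonneg hA0 _)



open scoped RealInnerProductSpace

variable {E : Type*} [NormedAddCommGroup E] [InnerProductSpace ℝ E] [CompleteSpace E]

lemma fderiv_eq_inner_gradient (f : E → ℝ) (x : E) (v : E) :
    fderiv ℝ f x v = ⟪gradient f x, v⟫ := by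
  have : (InnerProductSpace.toDual ℝ E) (gradient f x) = fderiv ℝ f x :=
    (InnerProductSpace.toDual ℝ E).apply_symm_apply _
  rw [← this, InnerProductSpace.toDual_apply_apply]

lemma seg_mem {U : Set E} (hUconv : Convex ℝ U) {w a : E} (hw : w ∈ U) (hwa : w + a ∈ U)
    {t : ℝ} (ht : t ∈ Set.Icc (0:ℝ) 1) : w + t • a ∈ U := by
  have := hUconv hw hwa (by linarith [ht.2] : (0:ℝ) ≤ 1 - t) ht.1 (by ring)
  convert this using 1
  module

lemma descent_lemma (f : E → ℝ) (U : Set E) (hUconv : Convex ℝ U)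
    (hdiff : ∀ x ∈ U, DifferentiableAt ℝ f x) (Lc : ℝ)
    (hsmooth : ∀ x ∈ U, ∀ y ∈ U, ‖gradient f x - gradient f y‖ ≤ Lc * ‖x - y‖)
    (w a : E) (hw : w ∈ U) (hwa : w + a ∈ U) :
    f (w + a) ≤ f w + ⟪gradient f w, a⟫ + Lc / 2 * ‖a‖ ^ 2 := by
  set φ' : ℝ → ℝ := fun t => ⟪gradient f (w + t • a), a⟫ with hφ'
  have hmem : ∀ t ∈ Set.Icc (0:ℝ) 1, w + t • a ∈ U := fun t ht => seg_mem hUconv hw hwa ht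
  have hderiv : ∀ t ∈ Set.Icc (0:ℝ) 1, HasDerivAt (fun t => f (w + t • a)) (φ' t) t := by
    intro t ht
    have hm : HasDerivAt (fun t : ℝ => w + t • a) a t := by
      simpa using ((hasDerivAt_id t).smul_const a).const_add w
    have hf := (hdiff _ (hmem t ht)).hasFDerivAt
    have := hf.comp_hasDerivAt t hm
    simpa [hφ', Function.comp_def] using this
  have hlip : LipschitzOnWith (Real.toNNReal (Lc * ‖a‖))
      (fun t : ℝ => gradient f (w + t • a)) (Set.Icc (0:ℝ) 1) := by
    rw [lipschitzOnWith_iff_dist_le_mul]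
    intro t ht u hu
    rw [dist_eq_norm, dist_eq_norm]
    have h1 := hsmooth _ (hmem t ht) _ (hmem u hu)
    have h2 : w + t • a - (w + u • a) = (t - u) • a := by module
    rw [h2, norm_smul] at h1
    refine h1.trans ?_
    have : Lc * ‖a‖ ≤ Real.toNNReal (Lc * ‖a‖) := Real.le_coe_toNNReal _
    rw [Real.norm_eq_abs]
    nlinarith [abs_nonneg (t - u), norm_nonneg a, Real.le_coe_toNNReal (Lc * ‖a‖)]
  have hcont : ContinuousOn φ' (Set.Icc (0:ℝ) 1) :=
    ContinuousOn.inner hlip.continuousOn continuousOn_const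
  have hint : IntervalIntegrable φ' MeasureTheory.volume 0 1 :=
    (hcont.mono (by rw [Set.uIcc_of_le (by norm_num : (0:ℝ) ≤ 1)])).intervalIntegrable
  have hftc : ∫ t in (0:ℝ)..1, φ' t = f (w + (1:ℝ) • a) - f (w + (0:ℝ) • a) :=
    intervalIntegral.integral_eq_sub_of_hasDerivAt
      (fun t ht => hderiv t (by rwa [Set.uIcc_of_le (by norm_num : (0:ℝ) ≤ 1)] at ht)) hint
  have hbound : ∀ t ∈ Set.Icc (0:ℝ) 1, φ' t ≤ ⟪gradient f w, a⟫ + (Lc * ‖a‖ ^ 2) * t := by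
    intro t ht
    have hdiffinner : φ' t - ⟪gradient f w, a⟫ = ⟪gradient f (w + t • a) - gradient f w, a⟫ := by
      rw [inner_sub_left]
    have h1 := hsmooth _ (hmem t ht) _ hw
    have h2 : w + t • a - w = t • a := by module
    rw [h2, norm_smul, Real.norm_eq_abs, abs_of_nonneg ht.1] at h1
    have h3 := real_inner_le_norm (gradient f (w + t • a) - gradient f w) a
    nlinarith [norm_nonneg a]
  have hintEq : ∫ t in (0:ℝ)..1, (⟪gradient f w, a⟫ + (Lc * ‖a‖ ^ 2) * t) =
      ⟪gradient f w, a⟫ + Lc / 2 * ‖a‖ ^ 2 := by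
    rw [intervalIntegral.integral_add intervalIntegrable_const
      ((by fun_prop : Continuous fun t : ℝ => Lc * ‖a‖ ^ 2 * t).intervalIntegrable 0 1),
      intervalIntegral.integral_const, intervalIntegral.integral_const_mul, integral_id]
    norm_num
    ring
  have hmono : ∫ t in (0:ℝ)..1, φ' t ≤ ∫ t in (0:ℝ)..1, (⟪gradient f w, a⟫ + (Lc * ‖a‖ ^ 2) * t) := by
    refine intervalIntegral.integral_mono_on (by norm_num) hint ?_ hbound
    exact ((by fun_prop : Continuous fun t : ℝ => ⟪gradient f w, a⟫ + Lc * ‖a‖ ^ 2 * t)).intervalIntegrable 0 1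
  rw [hintEq] at hmono
  rw [hftc] at hmono
  simp only [one_smul, zero_smul, add_zero] at hmono
  linarith

lemma convex_lower (f : E → ℝ) (U : Set E) (hUconv : Convex ℝ U)
    (hconv : ConvexOn ℝ U f)
    (hdiff : ∀ x ∈ U, DifferentiableAt ℝ f x)
    (w a : E) (hw : w ∈ U) (hwa : w + a ∈ U) :
    f w + ⟪gradient f w, a⟫ ≤ f (w + a) := by
  set φ : ℝ → ℝ := fun t => f (w + t • a) with hφ
  have hmem : ∀ t ∈ Set.Icc (0:ℝ) 1, w + t • a ∈ U := fun t ht => seg_mem hUconv hw hwa ht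
  have hφconv : ConvexOn ℝ (Set.Icc (0:ℝ) 1) φ := by
    refine ⟨convex_Icc _ _, ?_⟩
    intro t ht u hu μ ν hμ hν hμν
    have he : w + (μ * t + ν * u) • a = μ • (w + t • a) + ν • (w + u • a) := by
      have h1 : w = (μ + ν) • w := by rw [hμν, one_smul]
      conv_lhs => rw [h1]
      module
    have := hconv.2 (hmem t ht) (hmem u hu) hμ hν hμν
    simpa [hφ, he, smul_eq_mul] using this
  have hd0 : HasDerivAt φ ⟪gradient f w, a⟫ 0 := by
    have hm : HasDerivAt (fun t : ℝ => w + t • a) a 0 := by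
      simpa using ((hasDerivAt_id (0:ℝ)).smul_const a).const_add w
    have hf2 : HasFDerivAt f (fderiv ℝ f w) (w + (0:ℝ) • a) := by
      simpa using (hdiff _ hw).hasFDerivAt
    have h2 := hf2.comp_hasDerivAt (0:ℝ) hm
    simpa [hφ, Function.comp_def] using h2
  have := hφconv.le_slope_of_hasDerivAt (by norm_num : (0:ℝ) ∈ Set.Icc (0:ℝ) 1)
    (by norm_num : (1:ℝ) ∈ Set.Icc (0:ℝ) 1) (by norm_num) hd0
  rw [slope_def_field] at this
  simp only [hφ, one_smul, zero_smul, add_zero, sub_zero, div_one] at this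
  linarith


set_option maxHeartbeats 1000000 in
theorem error_bound_ratio (k n : ℕ) (hn : 1 ≤ n) (hnk : n ≤ k)
    (p ε q Lc G : ℝ) (hp : 1 < p) (hq : q = p / (p - 1)) (hε : 0 < ε)
    (f : EuclideanSpace ℝ (Fin k) → ℝ)
    (w : EuclideanSpace ℝ (Fin k))
    (U : Set (EuclideanSpace ℝ (Fin k)))
    (S : Set (EuclideanSpace ℝ (Fin k)))
    (hS : S = {a : EuclideanSpace ℝ (Fin k) |
        (∑ i, |a i| ^ p) ^ (1 / p) = ε ∧
        (Finset.univ.filter (fun i => a i ≠ 0)).card ≤ n})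
    (hwU : w ∈ U) (hU : ∀ a ∈ S, w + a ∈ U)
    (hUopen : IsOpen U) (hUconv : Convex ℝ U)
    (hdiff : ∀ x ∈ U, DifferentiableAt ℝ f x)
    (hconv : ConvexOn ℝ U f)
    (hsmooth : ∀ x ∈ U, ∀ y ∈ U, ‖gradient f x - gradient f y‖ ≤ Lc * ‖x - y‖)
    (g : EuclideanSpace ℝ (Fin k)) (hg : g = gradient f w)
    (hG : ‖g‖ = G) (hGpos : 0 < G)
    (T : Finset (Fin k)) (hT : T.card = n)
    (hTtop : ∀ i ∈ T, ∀ j, j ∉ T → |g j| ≤ |g i|)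
    (h : Fin k → ℝ) (hh : h = fun i => if i ∈ T then g i else 0)
    (ahat : EuclideanSpace ℝ (Fin k)) (hahatS : ahat ∈ S)
    (hmax : ∀ a ∈ S, ⟪a, g⟫ ≤ ⟪ahat, g⟫)
    (hval : ⟪ahat, g⟫ = ε * (∑ i, |h i| ^ q) ^ (1 / q)) :
    sSup {c : ℝ | ∃ a ∈ S, c = f (w + a) - f w} / (f (w + ahat) - f w) ≤
      1 + Lc * (max 1 ((n : ℝ) ^ ((1 : ℝ) / 2 - 1 / p))) ^ 2
            * (max 1 ((n : ℝ) ^ ((1 : ℝ) / 2 - 1 / q)))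
            * ε * Real.sqrt k / (2 * G * Real.sqrt n) := by
  classical
  have hp0 : (0:ℝ) < p := by linarith
  have hq1 : 1 < q := by rw [hq, lt_div_iff₀ (by linarith : (0:ℝ) < p - 1)]; linarith
  set β1 := max 1 ((n : ℝ) ^ ((1 : ℝ) / 2 - 1 / p)) with hβ1
  set β2 := max 1 ((n : ℝ) ^ ((1 : ℝ) / 2 - 1 / q)) with hβ2
  have hβ1pos : (0:ℝ) < β1 := lt_of_lt_of_le one_pos (le_max_left _ _)
  have hβ2pos : (0:ℝ) < β2 := lt_of_lt_of_le one_pos (le_max_left _ _)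
  set D := f (w + ahat) - f w with hD
  -- norm bound for elements of S
  have hnormS : ∀ a ∈ S, ‖a‖ ≤ β1 * ε := by
    intro a ha
    rw [hS] at ha
    obtain ⟨ha1, ha2⟩ := ha
    have hsp := sparse_l2_le n p hp (fun i => a i) ha2
    rw [ha1] at hsp
    calc ‖a‖ = Real.sqrt (∑ i, a i ^ 2) := by
          rw [EuclideanSpace.norm_eq]
          simp [Real.norm_eq_abs, sq_abs]
      _ ≤ β1 * ε := hsp
  -- support of h
  have hhsupp : (Finset.univ.filter (fun i => h i ≠ 0)).card ≤ n := by
    refine le_trans (Finset.card_le_card ?_) (le_of_eq hT)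
    intro i hi
    simp only [Finset.mem_filter] at hi
    by_contra hiT
    exact hi.2 (by simp [hh, hiT])
  have hhl2 := sparse_l2_le n q hq1 h hhsupp
  -- energy
  have hG2 : G ^ 2 = ∑ i, g i ^ 2 := by
    rw [← hG, EuclideanSpace.norm_eq, Real.sq_sqrt (by positivity)]
    simp [Real.norm_eq_abs, sq_abs]
  have hsum_h : ∑ i, h i ^ 2 = ∑ i ∈ T, g i ^ 2 := by
    have hterm : ∀ i, h i ^ 2 = if i ∈ T then g i ^ 2 else 0 := by
      intro i; by_cases hi : i ∈ T <;> simp [hh, hi]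
    simp only [hterm]
    rw [Finset.sum_ite_mem, Finset.univ_inter]
  have henergy : (n:ℝ) * G ^ 2 ≤ (k:ℝ) * ∑ i, h i ^ 2 := by
    rw [hG2, hsum_h]
    have hAnn : 0 ≤ ∑ i ∈ T, g i ^ 2 := Finset.sum_nonneg fun i _ => sq_nonneg _
    have hsplit : ∑ i, g i ^ 2 = (∑ i ∈ T, g i ^ 2) + ∑ i ∈ Tᶜ, g i ^ 2 :=
      (Finset.sum_add_sum_compl T _).symm
    have hB : (n:ℝ) * ∑ j ∈ Tᶜ, g j ^ 2 ≤ ((k:ℝ) - n) * ∑ i ∈ T, g i ^ 2 := by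
      have hone : ∀ j ∈ Tᶜ, (n:ℝ) * g j ^ 2 ≤ ∑ i ∈ T, g i ^ 2 := by
        intro j hj
        rw [Finset.mem_compl] at hj
        have hle : ∀ i ∈ T, g j ^ 2 ≤ g i ^ 2 := by
          intro i hi
          have := hTtop i hi j hj
          nlinarith [abs_nonneg (g j), sq_abs (g i), sq_abs (g j)]
        calc (n:ℝ) * g j ^ 2 = ∑ _i ∈ T, g j ^ 2 := by
              rw [Finset.sum_const, hT, nsmul_eq_mul]
          _ ≤ ∑ i ∈ T, g i ^ 2 := Finset.sum_le_sum hle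
      calc (n:ℝ) * ∑ j ∈ Tᶜ, g j ^ 2 = ∑ j ∈ Tᶜ, (n:ℝ) * g j ^ 2 := Finset.mul_sum _ _ _
        _ ≤ ∑ j ∈ Tᶜ, ∑ i ∈ T, g i ^ 2 := Finset.sum_le_sum hone
        _ = (Tᶜ.card : ℝ) * ∑ i ∈ T, g i ^ 2 := by rw [Finset.sum_const, nsmul_eq_mul]
        _ = ((k:ℝ) - n) * ∑ i ∈ T, g i ^ 2 := by
              congr 1
              rw [Finset.card_compl, hT, Fintype.card_fin, Nat.cast_sub hnk]
    rw [hsplit]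
    nlinarith [hAnn, (Nat.cast_le (α := ℝ)).mpr hnk]
  have hk1 : (0:ℝ) < (k:ℝ) := by
    have : 1 ≤ k := le_trans hn hnk
    exact_mod_cast Nat.lt_of_lt_of_le Nat.zero_lt_one this
  have hn0 : (0:ℝ) < (n:ℝ) := by exact_mod_cast Nat.lt_of_lt_of_le Nat.zero_lt_one hn
  have hsqrtk : (0:ℝ) < Real.sqrt k := Real.sqrt_pos.mpr hk1
  have hsqrtn : (0:ℝ) < Real.sqrt n := Real.sqrt_pos.mpr hn0
  -- lower bound on D
  set Dlb := ε * (Real.sqrt n * G / (β2 * Real.sqrt k)) with hDlb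
  have hDlbpos : 0 < Dlb :=
    mul_pos hε (div_pos (mul_pos hsqrtn hGpos) (mul_pos hβ2pos hsqrtk))
  have hDlbD : Dlb ≤ D := by
    have step1 : Real.sqrt n * G / Real.sqrt k ≤ Real.sqrt (∑ i, h i ^ 2) := by
      rw [Real.le_sqrt (by positivity) (Finset.sum_nonneg fun i _ => sq_nonneg _)]
      rw [div_pow, mul_pow, Real.sq_sqrt hn0.le, Real.sq_sqrt hk1.le]
      rw [div_le_iff₀ hk1]
      linarith [henergy]
    have step2 : Real.sqrt n * G / (β2 * Real.sqrt k) ≤ (∑ i, |h i| ^ q) ^ ((1:ℝ) / q) := by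
      rw [div_le_iff₀ (mul_pos hβ2pos hsqrtk)]
      have := step1.trans hhl2
      rw [div_le_iff₀ hsqrtk] at this
      calc Real.sqrt n * G = (Real.sqrt n * G / Real.sqrt k) * Real.sqrt k := by
            field_simp
        _ ≤ (β2 * (∑ i, |h i| ^ q) ^ ((1:ℝ) / q)) * Real.sqrt k := by
            have h1 : Real.sqrt n * G / Real.sqrt k ≤ β2 * (∑ i, |h i| ^ q) ^ ((1:ℝ) / q) := by
              rw [div_le_iff₀ hsqrtk]
              exact this
            exact mul_le_mul_of_nonneg_right h1 hsqrtk.le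
        _ = (∑ i, |h i| ^ q) ^ ((1:ℝ) / q) * (β2 * Real.sqrt k) := by ring
    have step3 : ε * (∑ i, |h i| ^ q) ^ ((1:ℝ) / q) ≤ D := by
      have hclow := convex_lower f U hUconv hconv hdiff w ahat hwU (hU ahat hahatS)
      rw [← hg] at hclow
      have : ⟪g, ahat⟫ = ε * (∑ i, |h i| ^ q) ^ ((1:ℝ) / q) := by
        rw [real_inner_comm]
        exact hval
      rw [this] at hclow
      rw [hD]; linarith
    calc Dlb ≤ ε * (∑ i, |h i| ^ q) ^ ((1:ℝ) / q) := by
          rw [hDlb]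
          exact mul_le_mul_of_nonneg_left step2 hε.le
      _ ≤ D := step3
  have hDpos : 0 < D := lt_of_lt_of_le hDlbpos hDlbD
  -- Lc nonneg
  have hahat_ne : ahat ≠ 0 := by
    intro h0
    rw [hS] at hahatS
    obtain ⟨h1, -⟩ := hahatS
    rw [h0] at h1
    have hz : ∀ x : Fin k, (0 : EuclideanSpace ℝ (Fin k)) x = 0 := fun _ => rfl
    simp only [hz, abs_zero, Real.zero_rpow (ne_of_gt hp0), Finset.sum_const_zero,
      Real.zero_rpow (one_div_ne_zero (ne_of_gt hp0))] at h1
    linarith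
  have hLc0 : 0 ≤ Lc := by
    have h1 := hsmooth w hwU (w + ahat) (hU ahat hahatS)
    rw [show w - (w + ahat) = -ahat by abel, norm_neg] at h1
    have h3 : 0 < ‖ahat‖ := norm_pos_iff.mpr hahat_ne
    have h4 : 0 ≤ Lc * ‖ahat‖ := le_trans (norm_nonneg _) h1
    by_contra hc
    push_neg at hc
    nlinarith
  set C := Lc / 2 * (β1 * ε) ^ 2 with hC
  have hC0 : 0 ≤ C := by
    rw [hC]; positivity
  -- upper bound on sSup
  have hsup : sSup {c : ℝ | ∃ a ∈ S, c = f (w + a) - f w} ≤ D + C := by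
    refine Real.sSup_le ?_ (by linarith)
    rintro c ⟨a, haS, rfl⟩
    have hdesc := descent_lemma f U hUconv hdiff Lc hsmooth w a hwU (hU a haS)
    rw [← hg] at hdesc
    have hin : ⟪g, a⟫ ≤ D := by
      have h1 : ⟪g, a⟫ = ⟪a, g⟫ := real_inner_comm _ _
      have h2 := hmax a haS
      have hclow := convex_lower f U hUconv hconv hdiff w ahat hwU (hU ahat hahatS)
      rw [← hg] at hclow
      have h3 : ⟪g, ahat⟫ = ⟪ahat, g⟫ := real_inner_comm _ _
      rw [hD]; linarith
    have hnorm2 : ‖a‖ ^ 2 ≤ (β1 * ε) ^ 2 :=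
      pow_le_pow_left₀ (norm_nonneg _) (hnormS a haS) 2
    have : Lc / 2 * ‖a‖ ^ 2 ≤ C := by
      rw [hC]
      nlinarith
    linarith
  -- final computation
  have hfinal : sSup {c : ℝ | ∃ a ∈ S, c = f (w + a) - f w} / D ≤ 1 + C / Dlb := by
    have h1 : sSup {c : ℝ | ∃ a ∈ S, c = f (w + a) - f w} / D ≤ (D + C) / D := by
      gcongr
    have h2 : (D + C) / D = 1 + C / D := by field_simp
    have h3 : C / D ≤ C / Dlb := by gcongr
    linarith
  refine hfinal.trans (le_of_eq ?_)
  have hβ2ne : β2 ≠ 0 := ne_of_gt hβ2pos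
  rw [hC, hDlb]
  field_simp
end
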